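/- Under the RMJ-based ranking model with identity central ranking and dispersion q ∈ (0,1), for a top-k list π_k with last element z and any item y ∉ R(π_k), the conditional probability λ(π_k ⊕ y)/λ(π_k) that the (k+1)-th most preferred item is y equals q^{h(y|z)-1} / (1 + q + ... + q^{n-k-1}), where h(y|z) = Σ_{x ∈ R^c(π_k)} 1{z < x ≤ y} if y > z, and h(y|z) = n - k - Σ_{x ∈ R^c(π_k)} 1{y < x < z} if y < z. -/

import Mathlib

open Finset

/-- ψ(n,q) = ∏_{i=1}^{n} (1 + q + ... + q^{i-1}). -/
def psi (n : ℕ) (q : ℝ) : ℝ := ∏ i ∈ Finset.range n, ∑ j ∈ Finset.range (i + 1), q ^ j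

/-- Reverse major index of a full permutation. -/
def dR {n : ℕ} (π : Equiv.Perm (Fin n)) : ℕ :=
  ∑ i : Fin (n - 1),
    if π ⟨i.val + 1, by have := i.isLt; omega⟩ < π ⟨i.val, by have := i.isLt; omega⟩ then
      n - (i.val + 1) else 0

/-- Truncated reverse major index of a top-k list. -/
def dtop {n k : ℕ} (f : Fin k → Fin n) : ℕ :=
  ∑ i : Fin (k - 1),
    if f ⟨i.val + 1, by have := i.isLt; omega⟩ < f ⟨i.val, by have := i.isLt; omega⟩ then
      n - (i.val + 1) else 0

/-- L(π_k): number of items not appearing in the top-k list that are smaller than its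
last entry. -/
def Ltop {n k : ℕ} (f : Fin k → Fin n) : ℕ :=
  if h : 0 < k then
    (Finset.univ.filter
      (fun x : Fin n => x ∉ Finset.image f Finset.univ ∧ x < f ⟨k - 1, by omega⟩)).card
  else 0

/-!
Summing the RMJ weight `q ^ dR π` over the permutations that extend an injective top-`k` list `f`
with last entry `z` gives `q ^ (dtop f + Ltop f) * ψ(n - k, q)`, by downward induction on `k`.
Appending an unranked item `y` raises `dtop + Ltop` by `h(y|z) - 1`, and `h(y|z)` is the position
of `y` when the `n - k` unranked items are read cyclically upwards starting just above `z`; so as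
`y` runs over them, `h(y|z) - 1` runs over `0, …, n - k - 1` and one step of the induction
contributes the factor `1 + q + ⋯ + q ^ (n - k - 1)`, the last factor of `ψ(n - k, q)`. The
conditional probability is the quotient of two such closed forms.
-/

section CyclicRank

variable {α : Type*} [LinearOrder α] (C : Finset α) (z : α)

/-- `h(y|z)` of the paper. -/
def cyclicRank (y : α) : ℕ :=
  if z < y then #{x ∈ C | z < x ∧ x ≤ y} else #C - #{x ∈ C | y < x ∧ x < z}

variable {C z}

theorem card_filter_le_of_mem {y : α} (hy : y ∈ C) :
    #{x ∈ C | x ≤ y} = #{x ∈ C | x < y} + 1 := by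
  rw [← card_insert_of_notMem (by simp : y ∉ {x ∈ C | x < y})]
  congr 1
  ext x
  simp only [mem_filter, mem_insert, le_iff_lt_or_eq]
  grind

/-- That is, `h(y|z) - 1 ≡ rank y - rank z (mod #C)`, ranks being taken in `C`. -/
theorem cyclicRank_add_card_filter_lt (hz : z ∉ C) {y : α} (hy : y ∈ C) :
    cyclicRank C z y + #{x ∈ C | x < z} = #{x ∈ C | x < y} + 1 + if y < z then #C else 0 := by
  rw [← card_filter_le_of_mem hy, cyclicRank]
  rcases lt_or_gt_of_ne (ne_of_mem_of_not_mem hy hz) with hyz | hzy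
  · have hsplit : #{x ∈ C | x < z} = #{x ∈ C | x ≤ y} + #{x ∈ C | y < x ∧ x < z} := by
      rw [← card_union_of_disjoint (disjoint_filter.2 fun x _ h h' => (not_lt.2 h) h'.1)]
      congr 1
      ext x
      simp only [mem_filter, mem_union]
      grind
    have hle : #{x ∈ C | y < x ∧ x < z} ≤ #C := card_filter_le _ _
    rw [if_neg (lt_asymm hyz), if_pos hyz]
    omega
  · have hsplit : #{x ∈ C | x ≤ y} = #{x ∈ C | x < z} + #{x ∈ C | z < x ∧ x ≤ y} := by
      rw [← card_union_of_disjoint (disjoint_filter.2 fun x _ h h' => (lt_asymm h) h'.1)]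
      congr 1
      ext x
      simp only [mem_filter, mem_union]
      grind
    rw [if_pos hzy, if_neg (lt_asymm hzy)]
    omega

theorem card_filter_lt_lt_card {y : α} (hy : y ∈ C) : #{x ∈ C | x < y} < #C :=
  card_lt_card (filter_ssubset.2 ⟨y, hy, lt_irrefl y⟩)

theorem card_filter_lt_lt_of_lt {y w : α} (hy : y ∈ C) (h : y < w) :
    #{x ∈ C | x < y} < #{x ∈ C | x < w} := by
  refine card_lt_card ⟨fun _ hx => ?_, fun hsub => ?_⟩
  · exact mem_filter.2 ⟨(mem_filter.1 hx).1, (mem_filter.1 hx).2.trans h⟩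
  · exact lt_irrefl y (mem_filter.1 (hsub (mem_filter.2 ⟨hy, h⟩))).2

theorem card_filter_lt_mono {y w : α} (h : y ≤ w) : #{x ∈ C | x < y} ≤ #{x ∈ C | x < w} :=
  card_le_card fun _ hx => mem_filter.2 ⟨(mem_filter.1 hx).1, (mem_filter.1 hx).2.trans_le h⟩

theorem cyclicRank_mem_Icc (hz : z ∉ C) {y : α} (hy : y ∈ C) :
    cyclicRank C z y ∈ Icc 1 #C := by
  have hkey := cyclicRank_add_card_filter_lt hz hy
  have := card_filter_lt_lt_card hy
  rw [mem_Icc]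
  by_cases hyz : y < z
  · have := card_filter_lt_lt_of_lt hy hyz
    have : #{x ∈ C | x < z} ≤ #C := card_filter_le _ _
    rw [if_pos hyz] at hkey
    omega
  · have := card_filter_lt_mono (C := C) (not_lt.1 hyz)
    rw [if_neg hyz] at hkey
    omega

theorem cyclicRank_injOn (hz : z ∉ C) : Set.InjOn (cyclicRank C z) C := by
  intro y₁ hy₁ y₂ hy₂ h
  by_contra hne
  wlog hlt : y₁ < y₂ generalizing y₁ y₂
  · exact this hy₂ hy₁ h.symm (Ne.symm hne) (lt_of_le_of_ne (not_lt.1 hlt) (Ne.symm hne))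
  have h₁ := cyclicRank_add_card_filter_lt hz hy₁
  have h₂ := cyclicRank_add_card_filter_lt hz hy₂
  have := card_filter_lt_lt_card hy₂
  have := card_filter_lt_lt_of_lt hy₁ hlt
  by_cases hy₁z : y₁ < z <;> by_cases hy₂z : y₂ < z
  all_goals simp only [hy₁z, hy₂z, if_true, if_false] at h₁ h₂
  all_goals omega

theorem sum_cyclicRank_sub_one {M : Type*} [AddCommMonoid M] (hz : z ∉ C) (g : ℕ → M) :
    ∑ y ∈ C, g (cyclicRank C z y - 1) = ∑ j ∈ range #C, g j := by
  have hmaps : Set.MapsTo (fun y => cyclicRank C z y - 1) C (range #C) := fun y hy => by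
    have := mem_Icc.1 (cyclicRank_mem_Icc hz hy)
    simp only [coe_range, Set.mem_Iio]
    omega
  have hinj : Set.InjOn (fun y => cyclicRank C z y - 1) C := fun y₁ hy₁ y₂ hy₂ h => by
    have := mem_Icc.1 (cyclicRank_mem_Icc hz hy₁)
    have := mem_Icc.1 (cyclicRank_mem_Icc hz hy₂)
    exact cyclicRank_injOn hz hy₁ hy₂ (by simp only at h; omega)
  exact sum_nbij _ hmaps hinj (surjOn_of_injOn_of_card_le _ hmaps hinj (by simp)) fun _ _ => rfl

end CyclicRank

section TopKList

variable {n k : ℕ}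

def unranked (f : Fin k → Fin n) : Finset (Fin n) := {x | x ∉ Finset.image f Finset.univ}

theorem mem_unranked {f : Fin k → Fin n} {y : Fin n} :
    y ∈ unranked f ↔ y ∉ Set.range f := by
  simp [unranked]

theorem apply_notMem_unranked (f : Fin k → Fin n) (i : Fin k) : f i ∉ unranked f :=
  fun h => mem_unranked.1 h ⟨i, rfl⟩

theorem card_unranked {f : Fin k → Fin n} (hf : Function.Injective f) :
    #(unranked f) = n - k := by
  rw [show unranked f = (image f univ)ᶜ by ext; simp [unranked], card_compl,
    card_image_of_injective _ hf, card_univ, Fintype.card_fin, Fintype.card_fin]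

theorem cyclicRank_unranked {f : Fin k → Fin n} (hf : Function.Injective f) (z y : Fin n) :
    cyclicRank (unranked f) z y =
      if z < y then #{x | x ∉ image f univ ∧ z < x ∧ x ≤ y}
      else n - k - #{x | x ∉ image f univ ∧ y < x ∧ x < z} := by
  rw [cyclicRank, card_unranked hf, unranked, filter_filter, filter_filter]

theorem dtop_snoc (hk : 1 ≤ k) (f : Fin k → Fin n) (y : Fin n) :
    dtop (Fin.snoc f y : Fin (k + 1) → Fin n) =
      dtop f + if y < f ⟨k - 1, Nat.sub_lt hk Nat.one_pos⟩ then n - k else 0 := by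
  obtain ⟨m, rfl⟩ : ∃ m, k = m + 1 := ⟨k - 1, by omega⟩
  show (∑ i : Fin (m + 1), _) = (∑ i : Fin m, _) + _
  rw [Fin.sum_univ_castSucc]
  congr 1
  · refine Fintype.sum_congr _ _ fun i => ?_
    simp [Fin.snoc, Fin.castLT]
  · simp [Fin.snoc, Fin.castLT]

theorem Ltop_eq (hk : 1 ≤ k) (f : Fin k → Fin n) :
    Ltop f = #{x ∈ unranked f | x < f ⟨k - 1, Nat.sub_lt hk Nat.one_pos⟩} := by
  rw [Ltop, dif_pos (by omega), unranked, filter_filter]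

theorem Ltop_snoc (f : Fin k → Fin n) (y : Fin n) :
    Ltop (Fin.snoc f y : Fin (k + 1) → Fin n) = #{x ∈ unranked f | x < y} := by
  rw [Ltop_eq le_add_self]
  congr 1
  ext x
  have hlast : (Fin.snoc f y : Fin (k + 1) → Fin n) ⟨k + 1 - 1, by omega⟩ = y :=
    Fin.snoc_last ..
  simp only [mem_filter, mem_unranked, Fin.range_snoc, Set.mem_insert_iff, not_or, hlast]
  grind

theorem dtop_add_Ltop_snoc (hk : 1 ≤ k) {f : Fin k → Fin n} (hf : Function.Injective f)
    {y : Fin n} (hy : y ∉ Set.range f) :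
    dtop (Fin.snoc f y : Fin (k + 1) → Fin n) + Ltop (Fin.snoc f y : Fin (k + 1) → Fin n) =
      dtop f + Ltop f +
        (cyclicRank (unranked f) (f ⟨k - 1, Nat.sub_lt hk Nat.one_pos⟩) y - 1) := by
  have hz := apply_notMem_unranked f ⟨k - 1, Nat.sub_lt hk Nat.one_pos⟩
  have hy' : y ∈ unranked f := mem_unranked.2 hy
  have hkey := cyclicRank_add_card_filter_lt hz hy'
  have hpos := (mem_Icc.1 (cyclicRank_mem_Icc hz hy')).1
  rw [card_unranked hf] at hkey
  rw [dtop_snoc hk, Ltop_snoc, Ltop_eq hk]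
  split_ifs at hkey ⊢ <;> omega

end TopKList

theorem psi_succ (m : ℕ) (q : ℝ) : psi (m + 1) q = psi m q * ∑ j ∈ range (m + 1), q ^ j :=
  prod_range_succ _ _

theorem psi_pos {q : ℝ} (hq : 0 ≤ q) (m : ℕ) : 0 < psi m q :=
  prod_pos fun _ _ => geom_sum_pos hq (Nat.succ_ne_zero _)

section PrefixWeight

variable {n k : ℕ}

/-- `ψ(n, q) λ(f)`: the RMJ weight of the permutations whose top-`k` list is `f`. -/
noncomputable def prefixWeight (q : ℝ) (hkn : k ≤ n) (f : Fin k → Fin n) : ℝ :=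
  ∑ π : Equiv.Perm (Fin n), if ∀ i : Fin k, π (Fin.castLE hkn i) = f i then q ^ dR π else 0

theorem prefixWeight_eq_sum_snoc (q : ℝ) (hkn : k + 1 ≤ n) (f : Fin k → Fin n) :
    prefixWeight q (Nat.le_of_succ_le hkn) f =
      ∑ y ∈ unranked f, prefixWeight q hkn (Fin.snoc f y) := by
  simp only [prefixWeight]
  rw [sum_comm]
  refine Fintype.sum_congr _ _ fun π => ?_
  have hsnoc : ∀ y, (∀ i : Fin (k + 1), π (Fin.castLE hkn i) = Fin.snoc f y i) ↔
      (∀ i : Fin k, π (Fin.castLE (Nat.le_of_succ_le hkn) i) = f i) ∧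
        π (Fin.castLE hkn (Fin.last k)) = y := by
    simp [Fin.forall_fin_succ']
  simp_rw [hsnoc]
  by_cases hπ : ∀ i : Fin k, π (Fin.castLE (Nat.le_of_succ_le hkn) i) = f i
  · have hmem : π (Fin.castLE hkn (Fin.last k)) ∈ unranked f := by
      rw [mem_unranked]
      rintro ⟨i, hi⟩
      rw [← hπ i, π.injective.eq_iff, Fin.ext_iff] at hi
      exact i.isLt.ne hi
    simp only [hπ, implies_true, true_and, if_true, sum_ite_eq, hmem]
  · simp [hπ]

theorem prefixWeight_of_injective (q : ℝ) {f : Fin n → Fin n} (hf : Function.Injective f) :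
    prefixWeight q le_rfl f = q ^ dtop f := by
  let π₀ : Equiv.Perm (Fin n) := Equiv.ofBijective f hf.bijective_of_finite
  rw [prefixWeight, Fintype.sum_eq_single π₀]
  · exact if_pos fun _ => rfl
  · intro π hπ
    refine if_neg fun h => hπ (Equiv.ext fun i => ?_)
    simpa [π₀] using h i

theorem prefixWeight_eq (q : ℝ) (hk : 1 ≤ k) (hkn : k ≤ n) {f : Fin k → Fin n}
    (hf : Function.Injective f) :
    prefixWeight q hkn f = q ^ (dtop f + Ltop f) * psi (n - k) q := by
  induction h : n - k generalizing k with
  | zero =>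
    obtain rfl : k = n := by omega
    have hL : Ltop f = 0 := by
      rw [Ltop_eq hk, ← Nat.le_zero, ← h, ← card_unranked hf]
      exact card_filter_le _ _
    rw [prefixWeight_of_injective q hf, hL, psi, prod_range_zero, mul_one, add_zero]
  | succ m ih =>
    have hstep : ∀ y ∈ unranked f, prefixWeight q (by omega) (Fin.snoc f y) =
        q ^ (dtop f + Ltop f) * psi m q *
          q ^ (cyclicRank (unranked f) (f ⟨k - 1, Nat.sub_lt hk Nat.one_pos⟩) y - 1) := by
      intro y hy
      have hy' := mem_unranked.1 hy
      rw [ih (by omega) (by omega) (Fin.snoc_injective_of_injective hf hy') (by omega),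
        dtop_add_Ltop_snoc hk hf hy', pow_add]
      ring
    rw [prefixWeight_eq_sum_snoc q (by omega : k + 1 ≤ n), sum_congr rfl hstep, ← mul_sum,
      sum_cyclicRank_sub_one (apply_notMem_unranked f _), card_unranked hf, h, psi_succ,
      mul_assoc]

theorem prefixWeight_snoc_div {q : ℝ} (hq : 0 < q) (hk : 1 ≤ k) (hkn : k + 1 ≤ n)
    {f : Fin k → Fin n} (hf : Function.Injective f) {y : Fin n} (hy : y ∉ Set.range f) :
    prefixWeight q hkn (Fin.snoc f y) / prefixWeight q (Nat.le_of_succ_le hkn) f =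
      q ^ (cyclicRank (unranked f) (f ⟨k - 1, Nat.sub_lt hk Nat.one_pos⟩) y - 1) /
        ∑ j ∈ range (n - k), q ^ j := by
  rw [prefixWeight_eq q (by omega) hkn (Fin.snoc_injective_of_injective hf hy),
    prefixWeight_eq q hk _ hf, dtop_add_Ltop_snoc hk hf hy, pow_add,
    show n - k = n - (k + 1) + 1 by omega, psi_succ]
  have := psi_pos hq.le (n - (k + 1))
  have := geom_sum_pos hq.le (Nat.succ_ne_zero (n - (k + 1)))
  field_simp

end PrefixWeight

theorem stmt6 (n k : ℕ) (hk : 1 ≤ k) (hkn : k + 1 ≤ n) (q : ℝ) (hq0 : 0 < q)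
    (f : Fin k → Fin n) (hf : Function.Injective f) (y : Fin n) (hy : y ∉ Set.range f) :
    (∑ π : Equiv.Perm (Fin n),
        if ∀ i : Fin (k + 1), π (Fin.castLE hkn i) = (Fin.snoc f y : Fin (k + 1) → Fin n) i
        then q ^ dR π / psi n q else 0) /
      (∑ π : Equiv.Perm (Fin n),
        if ∀ i : Fin k, π (Fin.castLE (by omega) i) = f i then q ^ dR π / psi n q else 0)
    = q ^ ((if f ⟨k - 1, by omega⟩ < y then
            (Finset.univ.filter (fun x : Fin n =>
              x ∉ Finset.image f Finset.univ ∧ f ⟨k - 1, by omega⟩ < x ∧ x ≤ y)).card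
          else
            n - k - (Finset.univ.filter (fun x : Fin n =>
              x ∉ Finset.image f Finset.univ ∧ y < x ∧ x < f ⟨k - 1, by omega⟩)).card) - 1) /
        ∑ j ∈ Finset.range (n - k), q ^ j := by
  have hnormalise : ∀ {j : ℕ} (hj : j ≤ n) (g : Fin j → Fin n),
      (∑ π : Equiv.Perm (Fin n), if ∀ i : Fin j, π (Fin.castLE hj i) = g i
        then q ^ dR π / psi n q else 0) = prefixWeight q hj g / psi n q := by
    intro j hj g
    simp only [prefixWeight, sum_div, ite_div, zero_div]
  rw [hnormalise, hnormalise, div_div_div_cancel_right₀ (psi_pos hq0.le n).ne',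
    prefixWeight_snoc_div hq0 hk hkn hf hy, cyclicRank_unranked hf]
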